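/- Let D and K be positive semidefinite n×n real symmetric matrices. Then 0 ≤ Tr[D + K − √(D² + 2 D^{1/2} K D^{1/2})] ≤ Tr K. -/

import Mathlib

/-!
For a real symmetric `B` and an orthonormal basis `(vᵢ)`,
`Tr B = ∑ ⟨vᵢ, B vᵢ⟩ ≤ ∑ ‖B vᵢ‖ = ∑ √⟨vᵢ, B² vᵢ⟩`.
In an eigenbasis of `S` (eigenvalues `sᵢ ≥ 0`), `S² - D² = 2 D^{1/2} K D^{1/2} ≥ 0` turns
this into `Tr D ≤ ∑ sᵢ = Tr S`. In an eigenbasis of `D^{1/2}` (eigenvalues `dᵢ`,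
`kᵢ = ⟨vᵢ, K vᵢ⟩ ≥ 0`) it gives `Tr S ≤ ∑ √(dᵢ⁴ + 2 dᵢ² kᵢ) ≤ ∑ (dᵢ² + kᵢ) = Tr D + Tr K`.
-/

open Unitary

namespace Matrix

variable {n : Type*} [Fintype n]

lemma IsHermitian.apply_self_le_sqrt_mul_self_apply {B : Matrix n n ℝ} (hB : B.IsHermitian)
    (i : n) : B i i ≤ √((B * B) i i) := by
  refine Real.le_sqrt_of_sq_le ?_
  have hsq : (B * B) i i = ∑ j, B i j ^ 2 := by
    simp only [mul_apply, sq]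
    exact Finset.sum_congr rfl fun j _ => by rw [show B j i = B i j by simpa using hB.apply i j]
  rw [hsq]
  exact Finset.single_le_sum (f := fun j => B i j ^ 2) (fun j _ => sq_nonneg _) (Finset.mem_univ i)

variable [DecidableEq n]

lemma trace_conjStarAlgAut {R : Type*} [CommRing R] [StarRing R]
    (u : unitary (Matrix n n R)) (A : Matrix n n R) :
    (conjStarAlgAut R _ u A).trace = A.trace := by
  rw [conjStarAlgAut_apply, trace_mul_cycle, coe_star_mul_self, one_mul]

lemma PosSemidef.conjStarAlgAut {R : Type*} [CommRing R] [PartialOrder R] [StarRing R]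
    {A : Matrix n n R} (hA : A.PosSemidef) (u : unitary (Matrix n n R)) :
    (Unitary.conjStarAlgAut R _ u A).PosSemidef := by
  simpa [star_eq_conjTranspose] using hA.mul_mul_conjTranspose_same (u : Matrix n n R)

lemma IsHermitian.trace_le_sum_sqrt_conjStarAlgAut {B : Matrix n n ℝ} (hB : B.IsHermitian)
    (u : unitary (Matrix n n ℝ)) :
    B.trace ≤ ∑ i, √(conjStarAlgAut ℝ _ u (B * B) i i) := by
  have hB' : (conjStarAlgAut ℝ _ u B).IsHermitian := (hB.isSelfAdjoint.map _).isHermitian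
  rw [← trace_conjStarAlgAut u B, map_mul]
  exact Finset.sum_le_sum fun i _ => hB'.apply_self_le_sqrt_mul_self_apply i

lemma IsHermitian.conjStarAlgAut_star_eigenvectorUnitary_real {A : Matrix n n ℝ}
    (hA : A.IsHermitian) :
    conjStarAlgAut ℝ _ (star hA.eigenvectorUnitary) A = diagonal hA.eigenvalues := by
  simpa using hA.conjStarAlgAut_star_eigenvectorUnitary

theorem trace_le_trace_of_posSemidef_sub_mul_self {A B : Matrix n n ℝ} (hA : A.PosSemidef)
    (hB : B.IsHermitian) (hAB : (A * A - B * B).PosSemidef) : B.trace ≤ A.trace := by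
  set φ := conjStarAlgAut ℝ _ (star hA.isHermitian.eigenvectorUnitary)
  have hφA : φ A = diagonal hA.isHermitian.eigenvalues :=
    hA.isHermitian.conjStarAlgAut_star_eigenvectorUnitary_real
  have hle : ∀ i, φ (B * B) i i ≤ φ (A * A) i i := fun i => by
    simpa only [map_sub, sub_apply, sub_nonneg] using (hAB.conjStarAlgAut _).diag_nonneg (i := i)
  calc B.trace ≤ ∑ i, √(φ (B * B) i i) := hB.trace_le_sum_sqrt_conjStarAlgAut _
    _ ≤ ∑ i, √(φ (A * A) i i) := Finset.sum_le_sum fun i _ => Real.sqrt_le_sqrt (hle i)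
    _ = (φ A).trace := by
      simp only [map_mul, hφA, diagonal_mul_diagonal, diagonal_apply_eq, trace_diagonal]
      exact Finset.sum_congr rfl fun i _ => Real.sqrt_mul_self (hA.eigenvalues_nonneg i)
    _ = A.trace := trace_conjStarAlgAut _ A

theorem trace_le_trace_mul_self_add_trace {S H K : Matrix n n ℝ} (hS : S.IsHermitian)
    (hH : H.IsHermitian) (hK : K.PosSemidef)
    (hSHK : S * S = H * H * (H * H) + 2 • (H * K * H)) :
    S.trace ≤ (H * H).trace + K.trace := by
  set φ := conjStarAlgAut ℝ _ (star hH.eigenvectorUnitary)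
  set d := hH.eigenvalues
  have hφH : φ H = diagonal d := hH.conjStarAlgAut_star_eigenvectorUnitary_real
  have hφK : ∀ i, 0 ≤ φ K i i := fun i => (hK.conjStarAlgAut _).diag_nonneg
  have hφS : ∀ i, φ (S * S) i i = (d i ^ 2) ^ 2 + 2 * (d i ^ 2 * φ K i i) := fun i => by
    rw [hSHK, map_add, map_nsmul, add_apply, smul_apply]
    simp only [map_mul, hφH, diagonal_mul_diagonal, mul_diagonal, diagonal_mul, diagonal_apply_eq,
      nsmul_eq_mul]
    ring
  calc S.trace ≤ ∑ i, √(φ (S * S) i i) := hS.trace_le_sum_sqrt_conjStarAlgAut _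
    _ ≤ ∑ i, (d i ^ 2 + φ K i i) := Finset.sum_le_sum fun i _ => by
      rw [hφS, Real.sqrt_le_left (add_nonneg (sq_nonneg _) (hφK i))]
      nlinarith [sq_nonneg (φ K i i)]
    _ = (φ (H * H)).trace + (φ K).trace := by
      simp only [Finset.sum_add_distrib, map_mul, hφH, diagonal_mul_diagonal, trace_diagonal, sq]
      rfl
    _ = (H * H).trace + K.trace := by rw [trace_conjStarAlgAut, trace_conjStarAlgAut]

end Matrix

open Matrix

/-- Finite-dimensional model of the Bogoliubov energy: for positive semidefinite real
symmetric matrices `D`, `K`, with `D^{1/2}` the positive square root of `D` and `S` the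
positive square root of `D² + 2 D^{1/2} K D^{1/2}`, one has
`0 ≤ Tr[D + K − S] ≤ Tr K`. -/
theorem bogoliubov_energy_trace_bounds
    {n : Type*} [Fintype n] [DecidableEq n]
    (D K Dh S : Matrix n n ℝ)
    (hD : D.PosSemidef) (hK : K.PosSemidef)
    (hDh : Dh.PosSemidef) (hDh2 : Dh * Dh = D)
    (hS : S.PosSemidef) (hS2 : S * S = D * D + 2 • (Dh * K * Dh)) :
    0 ≤ (D + K - S).trace ∧ (D + K - S).trace ≤ K.trace := by
  have hDS : D.trace ≤ S.trace := by
    refine trace_le_trace_of_posSemidef_sub_mul_self hS hD.isHermitian ?_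
    rw [hS2, add_sub_cancel_left, two_smul]
    have hDKD : (Dh * K * Dh).PosSemidef := by
      simpa only [hDh.isHermitian.eq] using hK.mul_mul_conjTranspose_same Dh
    exact hDKD.add hDKD
  have hSDK : S.trace ≤ D.trace + K.trace := by
    subst hDh2
    exact trace_le_trace_mul_self_add_trace hS.isHermitian hDh.isHermitian hK hS2
  rw [trace_sub, trace_add]
  constructor <;> linarith
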